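/- arXiv:2605.09101 — 3 statements merged into one kernel-verified Lean document; each statement's English description precedes it below -/
import Mathlib

section
/- Let (X, μ) be a measure space and (f_n) a monotone non-decreasing sequence of functions f_n: X → [0, ∞] (i.e. 0 ≤ f_1(x) ≤ f_2(x) ≤ ... μ-a.e.), with pointwise limit f. Then lim_{n→∞} ∫* f_n dμ = ∫* f dμ, where ∫* denotes the upper integral. -/
open scoped ENNReal NNReal
open MeasureTheory Metric Set Filter

/-- A Lorentzian pre-length space structure on a metric space `X`. -/
structure PLS (X : Type*) [MetricSpace X] where
  causal : X → X → Prop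
  chron : X → X → Prop
  tau : X → X → ℝ≥0∞
  causal_refl : ∀ x, causal x x
  causal_trans : ∀ {x y z}, causal x y → causal y z → causal x z
  chron_trans : ∀ {x y z}, chron x y → chron y z → chron x z
  chron_imp_causal : ∀ {x y}, chron x y → causal x y
  tau_lsc : LowerSemicontinuous fun p : X × X => tau p.1 p.2
  tau_revTriangle : ∀ {x y z}, causal x y → causal y z → tau x y + tau y z ≤ tau x z
  tau_eq_zero : ∀ {x y}, ¬ causal x y → tau x y = 0
  tau_pos_iff : ∀ {x y}, 0 < tau x y ↔ chron x y

namespace PLS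

variable {X : Type*} [MetricSpace X]

/-- Causal diamond `J(p,q)`. -/
def J (L : PLS X) (p q : X) : Set X := {x | L.causal p x ∧ L.causal x q}

/-- Chronological diamond `I(p,q)`. -/
def I (L : PLS X) (p q : X) : Set X := {x | L.chron p x ∧ L.chron x q}

/-- `p` and `q` are null related. -/
def NullRelated (L : PLS X) (p q : X) : Prop := L.causal p q ∧ ¬ L.chron p q

end PLS

/-- The normalizing constant `ω_s`. -/
noncomputable def omegaL (s : ℝ) : ℝ≥0∞ :=
  ENNReal.ofReal (Real.pi ^ ((s - 1) / 2) / (s * Real.Gamma ((s + 1) / 2) * (2 : ℝ) ^ (s - 1)))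

namespace PLS

variable {X : Type*} [MetricSpace X]

/-- `ρ_s(J(p,q)) = ω_s τ(p,q)^s`. -/
noncomputable def rho (L : PLS X) (s : ℝ) (p q : X) : ℝ≥0∞ := omegaL s * L.tau p q ^ s

/-- Members of the family `𝒥` encoded by `Option (X × X)`: `none` is the empty set,
`some (p,q)` the diamond `J(p,q)` with `p < q`. -/
def Jopt (L : PLS X) : Option (X × X) → Set X
  | none => ∅
  | some pq => L.J pq.1 pq.2

/-- Validity of a member of `𝒥`: nontrivial causally related vertices. -/
def memJJ (L : PLS X) : Option (X × X) → Prop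
  | none => True
  | some pq => L.causal pq.1 pq.2 ∧ pq.1 ≠ pq.2

/-- `ρ_s` extended to members of `𝒥` (or of the chronological family). -/
noncomputable def rhoOpt (L : PLS X) (s : ℝ) : Option (X × X) → ℝ≥0∞
  | none => 0
  | some pq => L.rho s pq.1 pq.2

/-- `δ`-approximation `𝒱^s_{d,δ}` of the Lorentzian Hausdorff measure. -/
noncomputable def Vd (L : PLS X) (s δ : ℝ) (A : Set X) : ℝ≥0∞ :=
  ⨅ (c : ℕ → Option (X × X)) (_ : (∀ i, L.memJJ (c i)) ∧
      (∀ i, Metric.diam (L.Jopt (c i)) < δ) ∧ A ⊆ ⋃ i, L.Jopt (c i)),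
    ∑' i, L.rhoOpt s (c i)

/-- The `s`-dimensional Lorentzian Hausdorff measure (as a set function);
since `Vd` is non-increasing in `δ`, the limit as `δ → 0` equals the supremum. -/
noncomputable def V (L : PLS X) (s : ℝ) (A : Set X) : ℝ≥0∞ :=
  ⨆ (δ : ℝ) (_ : 0 < δ), L.Vd s δ A

/-- Members of the chronological family, encoded by `Option (X × X)`. -/
def Iopt (L : PLS X) : Option (X × X) → Set X
  | none => ∅
  | some pq => L.I pq.1 pq.2

/-- Validity of a member of the chronological family. -/
def memII (L : PLS X) : Option (X × X) → Prop
  | none => True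
  | some pq => L.chron pq.1 pq.2

/-- `δ`-approximation `ℳ^s_δ` of the strong Lorentzian Hausdorff measure,
via coverings by chronological diamonds. -/
noncomputable def Md (L : PLS X) (s δ : ℝ) (A : Set X) : ℝ≥0∞ :=
  ⨅ (c : ℕ → Option (X × X)) (_ : (∀ i, L.memII (c i)) ∧
      (∀ i, Metric.diam (L.Iopt (c i)) ≤ δ) ∧ A ⊆ ⋃ i, L.Iopt (c i)),
    ∑' i, L.rhoOpt s (c i)

/-- Causal weighted `δ`-integral. -/
noncomputable def cwIntD (L : PLS X) (s δ : ℝ) (f : X → ℝ≥0∞) : ℝ≥0∞ :=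
  ⨅ (a : ℕ → ℝ≥0∞) (c : ℕ → Option (X × X))
    (_ : (∀ i, 0 < a i) ∧ (∀ i, L.memJJ (c i)) ∧
      (∀ i, Metric.diam (L.Jopt (c i)) ≤ δ) ∧
      ∀ x, f x ≤ ∑' i, a i * (L.Jopt (c i)).indicator 1 x),
    ∑' i, a i * L.rhoOpt s (c i)

/-- Causal weighted integral `∫• f dV^s_d`. -/
noncomputable def cwInt (L : PLS X) (s : ℝ) (f : X → ℝ≥0∞) : ℝ≥0∞ :=
  ⨆ (δ : ℝ) (_ : 0 < δ), L.cwIntD s δ f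

end PLS

section Maps

variable {X Y : Type*} [MetricSpace X] [MetricSpace Y]

/-- `U` is causality preserving. -/
def CausalityPreserving (LX : PLS X) (LY : PLS Y) (U : X → Y) : Prop :=
  ∀ p q, LX.causal p q → LY.causal (U p) (U q)

/-- `U` is timelike Lipschitz. -/
def TimelikeLipschitz (LX : PLS X) (LY : PLS Y) (U : X → Y) : Prop :=
  ∃ lam : ℝ, 0 < lam ∧
    ∀ p q, LX.causal p q → LY.tau (U p) (U q) ≤ ENNReal.ofReal lam * LX.tau p q

/-- The timelike Lipschitz constant `TLip U`. -/
noncomputable def TLip (LX : PLS X) (LY : PLS Y) (U : X → Y) : ℝ≥0∞ :=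
  ⨅ (lam : ℝ≥0∞)
    (_ : 0 < lam ∧ ∀ p q, LX.causal p q → LY.tau (U p) (U q) ≤ lam * LX.tau p q), lam

/-- `U` is uniformly `d`-controlling. -/
def UniformlyDControlling (LX : PLS X) (LY : PLS Y) (U : X → Y) : Prop :=
  CausalityPreserving LX LY U ∧
    ∃ η : ℝ → ℝ, (∀ s, 0 < s → 0 < η s) ∧
      Tendsto η (nhdsWithin 0 (Set.Ioi 0)) (nhds 0) ∧
      ∀ δ, 0 < δ → ∀ p q : X,
        Metric.diam (LX.J p q) < δ → Metric.diam (LY.J (U p) (U q)) < η δ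

/-- The summand `ρ_s(J(U a, U b)) ρ_t(J(a,b))` for `Φ`. -/
noncomputable def phiTerm (LX : PLS X) (LY : PLS Y) (U : X → Y) (s t : ℝ) :
    Option (X × X) → ℝ≥0∞
  | none => 0
  | some pq => LY.rho s (U pq.1) (U pq.2) * LX.rho t pq.1 pq.2

/-- `Φ^{s,t}_δ(U, E)`. -/
noncomputable def PhiD (LX : PLS X) (LY : PLS Y) (U : X → Y) (s t δ : ℝ) (E : Set X) : ℝ≥0∞ :=
  ⨅ (c : ℕ → Option (X × X)) (_ : (∀ i, LX.memJJ (c i)) ∧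
      (∀ i, Metric.diam (LX.Jopt (c i)) < δ) ∧ E ⊆ ⋃ i, LX.Jopt (c i)),
    ∑' i, phiTerm LX LY U s t (c i)

/-- `Φ^{s,t}(U, E) = lim_{δ→0} Φ^{s,t}_δ(U, E)`. -/
noncomputable def Phi (LX : PLS X) (LY : PLS Y) (U : X → Y) (s t : ℝ) (E : Set X) : ℝ≥0∞ :=
  ⨆ (δ : ℝ) (_ : 0 < δ), PhiD LX LY U s t δ E

end Maps

section Enlargement

variable {X : Type*} [MetricSpace X]

/-- `J(p',q')` is a causal enlargement of `J(p,q)` with constants `C₁, C₂`. -/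
def IsEnlargement (L : PLS X) (C1 C2 : ℝ) (p q p' q' : X) : Prop :=
  (∀ a b : X, L.causal a b → a ≠ b → (L.J a b ∩ L.J p q).Nonempty →
      Metric.diam (L.J a b) ≤ 2 * Metric.diam (L.J p q) → L.J a b ⊆ L.J p' q') ∧
  Metric.diam (L.J p' q') ≤ C1 * Metric.diam (L.J p q) ∧
  L.tau p' q' ≤ ENNReal.ofReal C2 * L.tau p q

/-- `Ux` is a causal enlargement neighborhood for constants `C₁, C₂`. -/
def CausalEnlargementNbhd (L : PLS X) (Ux : Set X) (C1 C2 : ℝ) : Prop :=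
  ∀ p q : X, L.chron p q → L.J p q ⊆ Ux → ∃ p' q', IsEnlargement L C1 C2 p q p' q'

/-- `X` satisfies the local causal enlargement property. -/
def LocalCausalEnlargement (L : PLS X) : Prop :=
  ∀ x : X, ∃ Ux ∈ nhds x, ∃ C1 C2 : ℝ, 1 ≤ C1 ∧ 1 ≤ C2 ∧ CausalEnlargementNbhd L Ux C1 C2

/-- `Ux` is a causal estimation neighborhood. -/
def CausalEstimationNbhd (L : PLS X) (Ux : Set X) : Prop :=
  (∀ p q : X, (L.I p q).Nonempty → L.I p q ⊆ Ux →
      Metric.diam (L.I p q) = Metric.diam (L.J p q)) ∧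
  (∀ p q : X, L.J p q ⊆ Ux → ∀ ε1 ε2 : ℝ, 1 < ε1 → 0 < ε2 →
      ∃ p' q', L.chron p' q' ∧ L.J p q ⊆ L.I p' q' ∧
        Metric.diam (L.I p' q') ≤ ε1 * Metric.diam (L.J p q) ∧
        L.tau p' q' ≤ L.tau p q + ENNReal.ofReal ε2)

/-- `X` satisfies the causal estimation property. -/
def CausalEstimation (L : PLS X) : Prop := ∀ x : X, ∃ Ux ∈ nhds x, CausalEstimationNbhd L Ux

end Enlargement

/-- The upper integral `∫* f dμ`. -/
noncomputable def upperInt {α : Type*} [MeasurableSpace α] (μ : Measure α) (f : α → ℝ≥0∞) : ℝ≥0∞ :=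
  ⨅ (φ : α → ℝ≥0∞) (_ : Measurable φ ∧ ∀ᵐ x ∂μ, f x ≤ φ x), ∫⁻ x, φ x ∂μ

/-!
Every function `f` has a measurable envelope: a measurable `φ ≥ f` a.e. with
`∫⁻ φ = ∫* f`, namely the pointwise infimum of a minimizing sequence of measurable majorants.
For an a.e. increasing sequence `fₙ`, replacing the envelope of `fₙ` by the infimum of the
envelopes of `fₘ`, `m ≥ n`, makes the envelopes increasing without changing their integrals,
and monotone convergence for the envelopes gives `∫* (⨆ n, fₙ) ≤ ⨆ n, ∫* fₙ`.
-/

section UpperIntegral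

variable {α : Type*} [MeasurableSpace α] (μ : Measure α)

theorem upperInt_le_lintegral {f φ : α → ℝ≥0∞} (hφ : Measurable φ) (hfφ : f ≤ᵐ[μ] φ) :
    upperInt μ f ≤ ∫⁻ x, φ x ∂μ :=
  iInf₂_le φ ⟨hφ, hfφ⟩

theorem upperInt_mono_ae {f g : α → ℝ≥0∞} (hfg : f ≤ᵐ[μ] g) : upperInt μ f ≤ upperInt μ g :=
  le_iInf₂ fun φ hφ => upperInt_le_lintegral μ hφ.1 (hfg.trans hφ.2)

theorem exists_measurable_ae_le_lintegral_eq_upperInt (f : α → ℝ≥0∞) :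
    ∃ φ : α → ℝ≥0∞, Measurable φ ∧ f ≤ᵐ[μ] φ ∧ ∫⁻ x, φ x ∂μ = upperInt μ f := by
  set S := (fun φ : α → ℝ≥0∞ => ∫⁻ x, φ x ∂μ) '' {φ | Measurable φ ∧ f ≤ᵐ[μ] φ}
  have hS : upperInt μ f = sInf S := by rw [sInf_image]; rfl
  have hne : S.Nonempty := ⟨_, fun _ => ∞, ⟨measurable_const, .of_forall fun _ => le_top⟩, rfl⟩
  obtain ⟨u, -, hu, huS⟩ := exists_seq_tendsto_sInf hne (OrderBot.bddBelow S)
  choose φ hφ hφu using huS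
  have hmeas : Measurable fun x => ⨅ n, φ n x := .iInf fun n => (hφ n).1
  have hle : f ≤ᵐ[μ] fun x => ⨅ n, φ n x := by
    filter_upwards [ae_all_iff.2 fun n => (hφ n).2] with x hx using le_iInf hx
  refine ⟨_, hmeas, hle, le_antisymm ?_ (upperInt_le_lintegral μ hmeas hle)⟩
  rw [hS]
  refine ge_of_tendsto' hu fun n => ?_
  rw [← hφu n]
  exact lintegral_mono fun x => iInf_le _ n

theorem exists_monotone_measurable_ae_le_lintegral_eq_upperInt {f : ℕ → α → ℝ≥0∞}
    (hmono : ∀ᵐ x ∂μ, Monotone fun n => f n x) :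
    ∃ g : ℕ → α → ℝ≥0∞, (∀ n, Measurable (g n)) ∧ Monotone g ∧ (∀ n, f n ≤ᵐ[μ] g n) ∧
      ∀ n, ∫⁻ x, g n x ∂μ = upperInt μ (f n) := by
  choose φ hφ hfφ hφint using fun n => exists_measurable_ae_le_lintegral_eq_upperInt μ (f n)
  have hfg : ∀ n, f n ≤ᵐ[μ] fun x => ⨅ m ≥ n, φ m x := by
    intro n
    filter_upwards [hmono, ae_all_iff.2 hfφ] with x hxmono hxφ
    exact le_iInf₂ fun m hnm => (hxmono hnm).trans (hxφ m)
  refine ⟨fun n x => ⨅ m ≥ n, φ m x, fun n => .iInf fun m => .iInf fun _ => hφ m,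
    fun n n' hnn' x => iInf₂_mono' fun m hm => ⟨m, hnn'.trans hm, le_rfl⟩, hfg, fun n => ?_⟩
  refine le_antisymm ?_ (upperInt_le_lintegral μ (.iInf fun m => .iInf fun _ => hφ m) (hfg n))
  rw [← hφint n]
  exact lintegral_mono fun x => iInf₂_le n le_rfl

theorem upperInt_iSup_of_ae_monotone {f : ℕ → α → ℝ≥0∞}
    (hmono : ∀ᵐ x ∂μ, Monotone fun n => f n x) :
    upperInt μ (fun x => ⨆ n, f n x) = ⨆ n, upperInt μ (f n) := by
  refine le_antisymm ?_
    (iSup_le fun n => upperInt_mono_ae μ (.of_forall fun x => le_iSup (f · x) n))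
  obtain ⟨g, hg, hg_mono, hfg, hg_int⟩ :=
    exists_monotone_measurable_ae_le_lintegral_eq_upperInt μ hmono
  have hsup : (fun x => ⨆ n, f n x) ≤ᵐ[μ] fun x => ⨆ n, g n x := by
    filter_upwards [ae_all_iff.2 hfg] with x hx using iSup_mono hx
  calc upperInt μ (fun x => ⨆ n, f n x)
      ≤ ∫⁻ x, ⨆ n, g n x ∂μ := upperInt_le_lintegral μ (.iSup hg) hsup
    _ = ⨆ n, ∫⁻ x, g n x ∂μ := lintegral_iSup hg hg_mono
    _ = ⨆ n, upperInt μ (f n) := by simp only [hg_int]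

end UpperIntegral

theorem stmt1 {α : Type*} [MeasurableSpace α] (μ : Measure α) (f : ℕ → α → ℝ≥0∞)
    (hmono : ∀ᵐ x ∂μ, Monotone fun n => f n x) :
    Tendsto (fun n => upperInt μ (f n)) atTop
      (nhds (upperInt μ fun x => ⨆ n, f n x)) := by
  rw [upperInt_iSup_of_ae_monotone μ hmono]
  refine tendsto_atTop_iSup fun n m hnm => upperInt_mono_ae μ ?_
  filter_upwards [hmono] with x hx using hx hnm
end

section
/- Let X be a Lorentzian pre-length space, s ≥ 0, and suppose every causal diamond in X is a Borel set. Then for every subset A ⊆ X there exists a Borel set Ã with A ⊆ Ã and V^s(A) = V^s(Ã), where V^s is the s-dimensional Lorentzian Hausdorff measure. -/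
open scoped ENNReal NNReal
open MeasureTheory Metric Set Filter

lemma Vd_mono' {X : Type*} [MetricSpace X] (L : PLS X) (s δ : ℝ) {A B : Set X} (h : A ⊆ B) :
    L.Vd s δ A ≤ L.Vd s δ B := by
  refine le_iInf fun c => le_iInf fun hc => ?_
  exact iInf_le_of_le c (iInf_le_of_le ⟨hc.1, hc.2.1, h.trans hc.2.2⟩ le_rfl)

lemma V_mono' {X : Type*} [MetricSpace X] (L : PLS X) (s : ℝ) {A B : Set X} (h : A ⊆ B) :
    L.V s A ≤ L.V s B :=
  iSup₂_mono fun _ _ => Vd_mono' L _ _ h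

lemma Vd_le_V' {X : Type*} [MetricSpace X] (L : PLS X) (s δ : ℝ) (hδ : 0 < δ) (A : Set X) :
    L.Vd s δ A ≤ L.V s A :=
  le_iSup₂_of_le δ hδ le_rfl

theorem stmt4 {X : Type*} [MetricSpace X] [MeasurableSpace X] [BorelSpace X]
    (L : PLS X) (s : ℝ) (hs : 0 ≤ s)
    (hBorel : ∀ p q : X, MeasurableSet (L.J p q)) (A : Set X) :
    ∃ B : Set X, A ⊆ B ∧ MeasurableSet B ∧ L.V s A = L.V s B := by
  by_cases hA : L.V s A = ⊤
  · refine ⟨Set.univ, Set.subset_univ A, MeasurableSet.univ, ?_⟩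
    have h := V_mono' L s (Set.subset_univ A)
    rw [hA] at h ⊢
    exact (top_le_iff.mp h).symm
  · have hex : ∀ n : ℕ, ∃ c : ℕ → Option (X × X),
        ((∀ i, L.memJJ (c i)) ∧ (∀ i, Metric.diam (L.Jopt (c i)) < 1/((n:ℝ)+1)) ∧
          A ⊆ ⋃ i, L.Jopt (c i)) ∧
        ∑' i, L.rhoOpt s (c i) ≤ L.Vd s (1/((n:ℝ)+1)) A + ENNReal.ofReal (1/((n:ℝ)+1)) := by
      intro n
      have hfin : L.Vd s (1/((n:ℝ)+1)) A ≠ ⊤ :=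
        ne_top_of_le_ne_top hA (Vd_le_V' L s _ (by positivity) A)
      have hpos : (0:ℝ≥0∞) < ENNReal.ofReal (1/((n:ℝ)+1)) :=
        ENNReal.ofReal_pos.mpr (by positivity)
      have hlt : L.Vd s (1/((n:ℝ)+1)) A <
          L.Vd s (1/((n:ℝ)+1)) A + ENNReal.ofReal (1/((n:ℝ)+1)) :=
        ENNReal.lt_add_right hfin hpos.ne'
      conv_lhs at hlt => rw [PLS.Vd]
      rw [iInf_lt_iff] at hlt
      obtain ⟨c, hc⟩ := hlt
      rw [iInf_lt_iff] at hc
      obtain ⟨hP, hsum⟩ := hc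
      exact ⟨c, hP, hsum.le⟩
    choose c hc hsum using hex
    refine ⟨⋂ n, ⋃ i, L.Jopt (c n i), Set.subset_iInter fun n => (hc n).2.2, ?_, ?_⟩
    · refine MeasurableSet.iInter fun n => MeasurableSet.iUnion fun i => ?_
      cases h : c n i with
      | none => simp [PLS.Jopt]
      | some pq => simpa [PLS.Jopt] using hBorel pq.1 pq.2
    · refine le_antisymm (V_mono' L s (Set.subset_iInter fun n => (hc n).2.2)) ?_
      refine iSup₂_le fun δ hδ => ?_
      refine ENNReal.le_of_forall_pos_le_add fun ε hε _ => ?_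
      obtain ⟨n, hn⟩ := exists_nat_one_div_lt (lt_min hδ (show (0:ℝ) < ε from hε))
      have h1 : L.Vd s δ (⋂ m, ⋃ i, L.Jopt (c m i)) ≤ ∑' i, L.rhoOpt s (c n i) := by
        refine iInf_le_of_le (c n) (iInf_le_of_le
          ⟨(hc n).1, fun i => ((hc n).2.1 i).trans (hn.trans_le (min_le_left _ _)),
            Set.iInter_subset _ n⟩ le_rfl)
      calc L.Vd s δ (⋂ m, ⋃ i, L.Jopt (c m i))
          ≤ ∑' i, L.rhoOpt s (c n i) := h1
        _ ≤ L.Vd s (1/((n:ℝ)+1)) A + ENNReal.ofReal (1/((n:ℝ)+1)) := hsum n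
        _ ≤ L.V s A + ↑ε := by
            refine add_le_add (Vd_le_V' L s _ (by positivity) A) ?_
            calc ENNReal.ofReal (1/((n:ℝ)+1))
                ≤ ENNReal.ofReal (ε:ℝ) :=
                  ENNReal.ofReal_le_ofReal (hn.trans_le (min_le_right _ _)).le
              _ = ↑ε := ENNReal.ofReal_coe_nnreal
end

section
/- Let (X, d, ≤, ≪, τ) be a Lorentzian pre-length space satisfying the local causal enlargement property and E ⊆ X with V^s_d(E) < ∞. Assume V^s_d is outer regular, V^s_d(J(p,q)) = 0 whenever p, q are null related, every causal diamond is closed, and E is contained in a compact set A with d(E, Aᶜ) > 0. Then for every ε > 0 there is a V^s_d-negligible set N ⊆ E such that for every x ∈ E \ N there exists δ_x > 0 with: for every causal diamond J with x ∈ J ⊆ B_d(x, δ_x), one has V^s_d(E ∩ J) ≤ (1 + ε) ρ_s(J). -/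
/-!
Let `N` be the set of points of `E` at which arbitrarily small diamonds `J` satisfy
`μ (E ∩ J) > (1 + ε) ρ_s(J)`; away from `N` the density bound holds by definition, so it suffices
to show `μ N = 0`. For `s = 0` this is immediate, since `omegaL 0 = 0` (its formula divides by
`s`). For `s > 0`, take an open `U ⊇ N` with `μ U ≤ μ N + η` and apply the Vitali covering lemma
to the small such diamonds inside `U`: the disjoint subfamily `u` it yields satisfies
`(1 + ε) ∑_u ρ_s ≤ μ U`. These diamonds are chronological (null diamonds are `V^s_d`-null), so by
compactness of `A` they have causal enlargements with uniform constants, and replacing all but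
finitely many members of `u` by their enlargements covers `N` at an arbitrarily small extra cost.
Hence `V^s_d(N) ≤ μ N / (1 + ε)`, which forces `μ N = 0`.
-/

open scoped ENNReal NNReal
open MeasureTheory Metric Set Filter

theorem exists_small_mem_subset_of_isOpen {X ι : Type*} [MetricSpace X] {N U : Set X}
    {B : ι → Set X} {P : ι → Prop} (hN : ∀ x ∈ N, ∀ r > 0, ∃ i, P i ∧ x ∈ B i ∧ B i ⊆ ball x r)
    (hU : IsOpen U) (hNU : N ⊆ U) {δ : ℝ} (hδ : 0 < δ) :
    ∀ x ∈ N, ∀ r > 0, ∃ i, P i ∧ x ∈ B i ∧ B i ⊆ ball x r ∧ B i ⊆ U ∧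
      Bornology.IsBounded (B i) ∧ diam (B i) < δ := by
  intro x hx r hr
  obtain ⟨r', hr', hr'U⟩ := isOpen_iff.1 hU x (hNU hx)
  set m := min (min r r') δ
  have hm : 0 < m := lt_min (lt_min hr hr') hδ
  obtain ⟨i, hi, hxi, hiB⟩ := hN x hx (m / 3) (by positivity)
  have him : B i ⊆ ball x m := hiB.trans (ball_subset_ball (by linarith))
  refine ⟨i, hi, hxi, him.trans (ball_subset_ball ((min_le_left _ _).trans (min_le_left _ _))),
    him.trans ((ball_subset_ball ((min_le_left _ _).trans (min_le_right _ _))).trans hr'U),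
    isBounded_ball.subset hiB, ?_⟩
  calc diam (B i) ≤ 2 * (m / 3) := (diam_mono hiB isBounded_ball).trans (diam_ball (by positivity))
    _ < δ := by linarith [min_le_right (min r r') δ]

theorem subset_biUnion_union_of_vitali {X ι κ : Type*} [MetricSpace X] {N : Set X}
    {B : ι → Set X} {B' : κ → Set X} {t : Set ι} {b : κ → ι} (F : Finset κ)
    (hB : ∀ k ∈ F, IsClosed (B (b k)))
    (hfine : ∀ x ∈ N, ∀ r > 0, ∃ a ∈ t, x ∈ B a ∧ B a ⊆ ball x r)
    (hvit : ∀ a ∈ t, ∃ k, (B a ∩ B (b k)).Nonempty ∧ diam (B a) ≤ 2 * diam (B (b k)))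
    (henl : ∀ a ∈ t, ∀ k, (B a ∩ B (b k)).Nonempty → diam (B a) ≤ 2 * diam (B (b k)) →
      B a ⊆ B' k) :
    N ⊆ (⋃ k ∈ F, B (b k)) ∪ ⋃ k ∉ F, B' k := by
  intro x hx
  by_cases hxW : x ∈ ⋃ k ∈ F, B (b k)
  · exact Or.inl hxW
  obtain ⟨r, hr, hball⟩ := isOpen_iff.1
    (F.finite_toSet.isClosed_biUnion hB).isOpen_compl x hxW
  obtain ⟨a, hat, hxa, har⟩ := hfine x hx r hr
  obtain ⟨k, ⟨y, hya, hyk⟩, hdiam⟩ := hvit a hat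
  exact Or.inr <| mem_iUnion₂.2 ⟨k, fun hkF => hball (har hya) (mem_biUnion hkF hyk),
    henl a hat k ⟨y, hya, hyk⟩ hdiam hxa⟩

theorem MeasureTheory.Measure.countable_and_tsum_le_of_pairwiseDisjoint {α ι : Type*}
    [MeasurableSpace α] (μ : Measure α) {E U : Set α} (hU : μ U ≠ ⊤) {B : ι → Set α}
    (hB : ∀ i, MeasurableSet (B i)) {u : Set ι} (hu : u.PairwiseDisjoint B)
    (hBU : ∀ i ∈ u, B i ⊆ U) {w : ι → ℝ≥0∞} {c : ℝ≥0∞} (hw : ∀ i ∈ u, c * w i < μ (E ∩ B i)) :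
    u.Countable ∧ c * ∑' i : u, w i ≤ μ U := by
  have hν : ∀ i, μ.restrict E (B i) = μ (E ∩ B i) := fun i => by
    rw [Measure.restrict_apply (hB i), inter_comm]
  have hcount : u.Countable := by
    have := (μ.restrict E).countable_meas_pos_of_disjoint_of_meas_iUnion_ne_top
      (As := fun i : u => B i) (fun i => hB i)
      (fun i j hij => hu i.2 j.2 (Subtype.coe_ne_coe.2 hij))
      (ne_top_of_le_ne_top hU ((Measure.restrict_apply_le _ _).trans
        (measure_mono (iUnion_subset fun i => hBU i i.2))))
    rw [← countable_coe_iff, ← countable_univ_iff]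
    exact this.mono fun i _ => by simpa only [mem_ofPred_eq, hν] using zero_le.trans_lt (hw i i.2)
  refine ⟨hcount, ?_⟩
  calc c * ∑' i : u, w i = ∑' i : u, c * w i := ENNReal.tsum_mul_left.symm
    _ ≤ ∑' i : u, μ.restrict E (B i) := ENNReal.tsum_le_tsum fun i => hν i ▸ (hw i i.2).le
    _ = μ.restrict E (⋃ i ∈ u, B i) := (measure_biUnion hcount hu fun i _ => hB i).symm
    _ ≤ μ.restrict E U := measure_mono (iUnion₂_subset hBU)
    _ ≤ μ U := Measure.restrict_apply_le _ _

lemma omegaL_zero : omegaL 0 = 0 := by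
  simp [omegaL]

lemma omegaL_pos {s : ℝ} (hs : 0 < s) : 0 < omegaL s := by
  rw [omegaL, ENNReal.ofReal_pos]
  have := Real.Gamma_pos_of_pos (s := (s + 1) / 2) (by linarith)
  positivity

namespace PLS

variable {X : Type*} [MetricSpace X] (L : PLS X)

lemma mem_J_left {p q : X} (h : L.causal p q) : p ∈ L.J p q := ⟨L.causal_refl p, h⟩

lemma mem_J_right {p q : X} (h : L.causal p q) : q ∈ L.J p q := ⟨h, L.causal_refl q⟩

lemma tau_self_eq_zero_or_top (x : X) : L.tau x x = 0 ∨ L.tau x x = ⊤ := by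
  have h := L.tau_revTriangle (L.causal_refl x) (L.causal_refl x)
  by_contra! h'
  exact (ENNReal.lt_add_right h'.2 h'.1).not_ge h

lemma ne_of_tau_pos {p q : X} (hpos : 0 < L.tau p q) (hfin : L.tau p q ≠ ⊤) : p ≠ q := by
  rintro rfl
  rcases L.tau_self_eq_zero_or_top p with h | h
  · exact hpos.ne' h
  · exact hfin h

lemma tau_le_of_J_subset {p q p' q' : X} (h : L.causal p q) (hJ : L.J p q ⊆ L.J p' q') :
    L.tau p q ≤ L.tau p' q' := by
  obtain ⟨hp'p, -⟩ := hJ (L.mem_J_left h)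
  obtain ⟨-, hqq'⟩ := hJ (L.mem_J_right h)
  calc L.tau p q ≤ L.tau p' p + L.tau p q := le_add_self
    _ ≤ L.tau p' q := L.tau_revTriangle hp'p h
    _ ≤ L.tau p' q + L.tau q q' := le_self_add
    _ ≤ L.tau p' q' := L.tau_revTriangle (L.causal_trans hp'p h) hqq'

lemma tau_ne_top_of_rho_ne_top {s : ℝ} (hs : 0 < s) {p q : X} (h : L.rho s p q ≠ ⊤) :
    L.tau p q ≠ ⊤ := by
  intro htop
  rw [rho, htop, ENNReal.top_rpow_of_pos hs, ENNReal.mul_top (omegaL_pos hs).ne'] at h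
  exact h rfl

lemma Vd_le_V {s δ : ℝ} (hδ : 0 < δ) (A : Set X) : L.Vd s δ A ≤ L.V s A :=
  le_iSup₂ (f := fun δ (_ : 0 < δ) => L.Vd s δ A) δ hδ

lemma V_eq_zero_of_omegaL_eq_zero {s : ℝ} (hω : omegaL s = 0) {A : Set X} (hA : L.V s A ≠ ⊤) :
    L.V s A = 0 := by
  have hrho : ∀ o, L.rhoOpt s o = 0 := by rintro (_ | _) <;> simp [rhoOpt, rho, hω]
  refine le_antisymm (iSup₂_le fun δ hδ => ?_) zero_le
  have hfin := ne_top_of_le_ne_top hA (L.Vd_le_V hδ A)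
  simp only [Vd, hrho, tsum_zero] at hfin ⊢
  by_contra hne
  exact hfin (iInf₂_eq_top.2 fun c hc => (hne (iInf₂_le c hc)).elim)

lemma Vd_le_tsum {ι : Type*} [Countable ι] {s δ : ℝ} (hδ : 0 < δ) {N : Set X} (G : ι → X × X)
    (hG : ∀ i, L.causal (G i).1 (G i).2 ∧ (G i).1 ≠ (G i).2)
    (hdiam : ∀ i, diam (L.J (G i).1 (G i).2) < δ) (hcov : N ⊆ ⋃ i, L.J (G i).1 (G i).2) :
    L.Vd s δ N ≤ ∑' i, L.rho s (G i).1 (G i).2 := by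
  obtain ⟨g, hg⟩ := Countable.exists_injective_nat ι
  -- `c` lists `G` along the injection `g` and is the empty member off its range.
  set c : ℕ → Option (X × X) := Function.extend g (some ∘ G) fun _ => none
  have hc : ∀ P : Option (X × X) → Prop, P none → (∀ i, P (some (G i))) → ∀ n, P (c n) := by
    intro P h0 h1 n
    by_cases hn : ∃ i, g i = n
    · obtain ⟨i, rfl⟩ := hn
      simpa [c, hg.extend_apply] using h1 i
    · simpa [c, Function.extend_apply' _ _ _ hn] using h0
  have hcov' : N ⊆ ⋃ n, L.Jopt (c n) := fun x hx => by
    obtain ⟨i, hi⟩ := mem_iUnion.1 (hcov hx)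
    exact mem_iUnion.2 ⟨g i, by simpa [c, hg.extend_apply, Jopt] using hi⟩
  have hsum : (fun n => L.rhoOpt s (c n)) =
      Function.extend g (fun i => L.rho s (G i).1 (G i).2) 0 := by
    funext n
    simp only [c, Function.apply_extend (L.rhoOpt s)]
    rfl
  calc L.Vd s δ N ≤ ∑' n, L.rhoOpt s (c n) :=
        iInf₂_le c ⟨hc L.memJJ trivial hG,
          hc (fun o => diam (L.Jopt o) < δ) (by simpa [Jopt] using hδ) hdiam, hcov'⟩
    _ = ∑' i, L.rho s (G i).1 (G i).2 := by rw [hsum, tsum_extend_zero hg]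

lemma Vd_le_tsum_add_of_forall_finset_subset {ι : Type*} [Countable ι] {s δ : ℝ} (hδ : 0 < δ)
    {N : Set X} (G G' : ι → X × X)
    (hG : ∀ i, L.causal (G i).1 (G i).2 ∧ (G i).1 ≠ (G i).2)
    (hG' : ∀ i, L.causal (G' i).1 (G' i).2 ∧ (G' i).1 ≠ (G' i).2)
    (hdiam : ∀ i, diam (L.J (G i).1 (G i).2) < δ) (hdiam' : ∀ i, diam (L.J (G' i).1 (G' i).2) < δ)
    (hfin : ∑' i, L.rho s (G' i).1 (G' i).2 ≠ ⊤)
    (hcov : ∀ F : Finset ι, N ⊆ (⋃ i ∈ F, L.J (G i).1 (G i).2) ∪ ⋃ i ∉ F, L.J (G' i).1 (G' i).2)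
    {η : ℝ≥0∞} (hη : η ≠ 0) :
    L.Vd s δ N ≤ ∑' i, L.rho s (G i).1 (G i).2 + η := by
  obtain ⟨F, hF⟩ := ((ENNReal.tendsto_tsum_compl_atTop_zero hfin).eventually
    (eventually_le_nhds (pos_iff_ne_zero.2 hη))).exists
  let H : F ⊕ {i // i ∉ F} → X × X := Sum.elim (fun i => G i) (fun i => G' i)
  calc L.Vd s δ N ≤ ∑' j, L.rho s (H j).1 (H j).2 :=
        L.Vd_le_tsum hδ H (Sum.rec (fun i => hG i) (fun i => hG' i))
          (Sum.rec (fun i => hdiam i) (fun i => hdiam' i))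
          (by simpa [H, iUnion_sum, iUnion_subtype] using hcov F)
    _ = ∑' i : F, L.rho s (G i).1 (G i).2 + ∑' i : {i // i ∉ F}, L.rho s (G' i).1 (G' i).2 :=
        Summable.tsum_sum ENNReal.summable ENNReal.summable
    _ ≤ ∑' i, L.rho s (G i).1 (G i).2 + η :=
        add_le_add (ENNReal.tsum_comp_le_tsum_of_injective Subtype.val_injective _) hF

end PLS

section Enlargement

variable {X : Type*} [MetricSpace X] {L : PLS X} {C1 C2 : ℝ} {p q p' q' : X}

lemma IsEnlargement.mono (h : IsEnlargement L C1 C2 p q p' q') {C1' C2' : ℝ} (h1 : C1 ≤ C1')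
    (h2 : C2 ≤ C2') : IsEnlargement L C1' C2' p q p' q' :=
  ⟨h.1, h.2.1.trans (by gcongr), h.2.2.trans (by gcongr)⟩

lemma IsEnlargement.J_subset (h : IsEnlargement L C1 C2 p q p' q') (hpq : L.causal p q)
    (hne : p ≠ q) : L.J p q ⊆ L.J p' q' :=
  h.1 p q hpq hne ⟨p, L.mem_J_left hpq, L.mem_J_left hpq⟩ (by linarith [diam_nonneg (s := L.J p q)])

lemma IsEnlargement.chron (h : IsEnlargement L C1 C2 p q p' q') (hpq : L.chron p q)
    (hne : p ≠ q) : L.chron p' q' :=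
  L.tau_pos_iff.1 <| (L.tau_pos_iff.2 hpq).trans_le <|
    L.tau_le_of_J_subset (L.chron_imp_causal hpq) (h.J_subset (L.chron_imp_causal hpq) hne)

lemma IsEnlargement.ne (h : IsEnlargement L C1 C2 p q p' q') (hpq : L.chron p q) (hne : p ≠ q)
    (hfin : L.tau p q ≠ ⊤) : p' ≠ q' :=
  L.ne_of_tau_pos (L.tau_pos_iff.2 (h.chron hpq hne))
    (ne_top_of_le_ne_top (ENNReal.mul_ne_top ENNReal.ofReal_ne_top hfin) h.2.2)

lemma IsEnlargement.diam_lt (h : IsEnlargement L C1 C2 p q p' q') (hC1 : 0 ≤ C1) {δ δ₀ : ℝ}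
    (hpq : diam (L.J p q) ≤ δ) (hδ : C1 * δ < δ₀) : diam (L.J p' q') < δ₀ :=
  h.2.1.trans_lt ((mul_le_mul_of_nonneg_left hpq hC1).trans_lt hδ)

lemma IsEnlargement.rho_le (h : IsEnlargement L C1 C2 p q p' q') {s : ℝ} (hs : 0 ≤ s) :
    L.rho s p' q' ≤ ENNReal.ofReal C2 ^ s * L.rho s p q := by
  calc L.rho s p' q' ≤ omegaL s * (ENNReal.ofReal C2 * L.tau p q) ^ s := by
        unfold PLS.rho; gcongr; exact h.2.2
    _ = ENNReal.ofReal C2 ^ s * L.rho s p q := by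
        rw [ENNReal.mul_rpow_of_nonneg _ _ hs, PLS.rho]; ring

lemma LocalCausalEnlargement.exists_uniform_of_isCompact (hL : LocalCausalEnlargement L)
    {A : Set X} (hA : IsCompact A) :
    ∃ R > 0, ∃ C1 C2 : ℝ, 1 ≤ C1 ∧ ∀ p q, L.chron p q → (L.J p q ∩ A).Nonempty →
      Bornology.IsBounded (L.J p q) → diam (L.J p q) < R →
      ∃ p' q', IsEnlargement L C1 C2 p q p' q' := by
  choose U hU C1 C2 _ _ hCE using hL
  obtain ⟨T, hT⟩ := hA.elim_finite_subcover (fun x => interior (U x)) (fun _ => isOpen_interior)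
    fun x _ => mem_iUnion.2 ⟨x, mem_interior_iff_mem_nhds.2 (hU x)⟩
  obtain ⟨R, hR, hleb⟩ := lebesgue_number_lemma_of_metric (c := fun i : T => interior (U i)) hA
    (fun _ => isOpen_interior) (by rwa [iUnion_subtype])
  obtain ⟨B1, hB1⟩ := (T.image C1).bddAbove
  obtain ⟨B2, hB2⟩ := (T.image C2).bddAbove
  refine ⟨R, hR, max B1 1, B2, le_max_right _ _, fun p q hpq ⟨z, hzJ, hzA⟩ hbdd hdiam => ?_⟩
  obtain ⟨i, hi⟩ := hleb z hzA
  have hJU : L.J p q ⊆ U i := fun y hy =>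
    interior_subset (hi (mem_ball.2 ((dist_le_diam_of_mem hbdd hy hzJ).trans_lt hdiam)))
  obtain ⟨p', q', h⟩ := hCE i p q hpq hJU
  exact ⟨p', q', h.mono ((hB1 (Finset.mem_image_of_mem _ i.2)).trans (le_max_left _ _))
    (hB2 (Finset.mem_image_of_mem _ i.2))⟩

end Enlargement

namespace PLS

variable {X : Type*} [MetricSpace X] (L : PLS X)

theorem Vd_le_add_of_fine_cover {s : ℝ} (hs : 0 ≤ s) {C1 C2 δ δ₀ : ℝ} (hδ₀ : 0 < δ₀)
    (hC1 : 1 ≤ C1) (hδ : C1 * δ < δ₀) (hclosed : ∀ p q, IsClosed (L.J p q)) {N : Set X}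
    {t : Set (X × X)}
    (hfine : ∀ x ∈ N, ∀ r > 0, ∃ a ∈ t, x ∈ L.J a.1 a.2 ∧ L.J a.1 a.2 ⊆ ball x r)
    (ht : ∀ a ∈ t, L.chron a.1 a.2 ∧ a.1 ≠ a.2 ∧ L.tau a.1 a.2 ≠ ⊤ ∧
      diam (L.J a.1 a.2) < δ ∧ ∃ e : X × X, IsEnlargement L C1 C2 a.1 a.2 e.1 e.2)
    {M : ℝ≥0∞} (hM : M ≠ ⊤)
    (hdisj : ∀ u ⊆ t, u.PairwiseDisjoint (fun a => L.J a.1 a.2) →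
      u.Countable ∧ ∑' a : u, L.rho s a.1.1 a.1.2 ≤ M)
    {η : ℝ≥0∞} (hη : η ≠ 0) :
    L.Vd s δ₀ N ≤ M + η := by
  obtain ⟨u, hut, hu, hvit⟩ := Vitali.exists_disjoint_subfamily_covering_enlargement
    (fun a => L.J a.1 a.2) t (fun a => diam (L.J a.1 a.2)) 2 one_lt_two
    (fun _ _ => diam_nonneg) δ (fun a ha => (ht a ha).2.2.2.1.le)
    (fun a ha => ⟨a.1, L.mem_J_left (L.chron_imp_causal (ht a ha).1)⟩)
  obtain ⟨hucount, hsum⟩ := hdisj u hut hu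
  have := hucount.to_subtype
  choose e he using fun b : u => (ht b.1 (hut b.2)).2.2.2.2
  have hdiam : ∀ b : u, diam (L.J b.1.1 b.1.2) < δ₀ := fun b => by
    nlinarith [(ht b.1 (hut b.2)).2.2.2.1, diam_nonneg (s := L.J b.1.1 b.1.2)]
  have hfin : ∑' b : u, L.rho s (e b).1 (e b).2 < ⊤ :=
    calc ∑' b : u, L.rho s (e b).1 (e b).2
        ≤ ∑' b : u, ENNReal.ofReal C2 ^ s * L.rho s b.1.1 b.1.2 :=
          ENNReal.tsum_le_tsum fun b => (he b).rho_le hs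
      _ = ENNReal.ofReal C2 ^ s * ∑' b : u, L.rho s b.1.1 b.1.2 := ENNReal.tsum_mul_left
      _ ≤ ENNReal.ofReal C2 ^ s * M := by gcongr
      _ < ⊤ := ENNReal.mul_lt_top (ENNReal.rpow_lt_top_of_nonneg hs ENNReal.ofReal_ne_top)
          hM.lt_top
  have hcov (F : Finset u) :
      N ⊆ (⋃ b ∈ F, L.J b.1.1 b.1.2) ∪ ⋃ b ∉ F, L.J (e b).1 (e b).2 := by
    refine subset_biUnion_union_of_vitali (B := fun a => L.J a.1 a.2) (b := Subtype.val)
      (B' := fun b => L.J (e b).1 (e b).2) (t := t) F (fun b _ => hclosed b.1.1 b.1.2) hfine ?_ ?_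
    · intro a ha
      obtain ⟨b, hbu, hb⟩ := hvit a ha
      exact ⟨⟨b, hbu⟩, hb⟩
    · intro a ha b
      exact (he b).1 a.1 a.2 (L.chron_imp_causal (ht a ha).1) (ht a ha).2.1
  calc L.Vd s δ₀ N ≤ ∑' b : u, L.rho s b.1.1 b.1.2 + η := by
        refine L.Vd_le_tsum_add_of_forall_finset_subset hδ₀ Subtype.val e
          (fun b => ?_) (fun b => ?_) hdiam
          (fun b => (he b).diam_lt (by linarith) (ht b.1 (hut b.2)).2.2.2.1.le hδ) hfin.ne hcov hη
        · obtain ⟨hchron, hne, -⟩ := ht b.1 (hut b.2)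
          exact ⟨L.chron_imp_causal hchron, hne⟩
        · obtain ⟨hchron, hne, hfin, -⟩ := ht b.1 (hut b.2)
          exact ⟨L.chron_imp_causal ((he b).chron hchron hne), (he b).ne hchron hne hfin⟩
    _ ≤ M + η := by gcongr

end PLS

section Density

variable {X : Type*} [MetricSpace X] [MeasurableSpace X] {L : PLS X} {s : ℝ}
  {μ : Measure X} {E A N : Set X} {c : ℝ≥0∞}

lemma PLS.chron_of_measure_inter_pos (hnull : ∀ p q, L.NullRelated p q → μ (L.J p q) = 0)
    {p q : X} (hpq : L.causal p q) (hpos : 0 < μ (E ∩ L.J p q)) : L.chron p q := by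
  by_contra h
  exact hpos.ne' (measure_mono_null inter_subset_right (hnull p q ⟨hpq, h⟩))

variable [BorelSpace X]

theorem PLS.Vd_le_measure_div_add_of_isOpen (hs : 0 < s) (hL : LocalCausalEnlargement L)
    (hnull : ∀ p q, L.NullRelated p q → μ (L.J p q) = 0) (hclosed : ∀ p q, IsClosed (L.J p q))
    (hA : IsCompact A) (hNA : N ⊆ A) (hc : c ≠ 0)
    (hN : ∀ x ∈ N, ∀ r > (0 : ℝ), ∃ a : X × X,
      (L.causal a.1 a.2 ∧ a.1 ≠ a.2 ∧ c * L.rho s a.1 a.2 < μ (E ∩ L.J a.1 a.2)) ∧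
      x ∈ L.J a.1 a.2 ∧ L.J a.1 a.2 ⊆ ball x r)
    {U : Set X} (hUo : IsOpen U) (hNU : N ⊆ U) (hU : μ U ≠ ⊤)
    {δ₀ : ℝ} (hδ₀ : 0 < δ₀) {η : ℝ≥0∞} (hη : η ≠ 0) :
    L.Vd s δ₀ N ≤ μ U / c + η := by
  obtain ⟨R, hR, C1, C2, hC1, henl⟩ := hL.exists_uniform_of_isCompact hA
  set δ := min R (δ₀ / (C1 + 1))
  have hδ : 0 < δ := lt_min hR (div_pos hδ₀ (by linarith))
  have hC1δ : C1 * δ < δ₀ :=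
    calc C1 * δ ≤ C1 * (δ₀ / (C1 + 1)) := by gcongr; exact min_le_right _ _
      _ < δ₀ := by rw [mul_div_assoc', div_lt_iff₀ (by linarith)]; nlinarith
  -- `δ ≤ R` makes the diamonds of `t` enlargeable and `C1 * δ < δ₀` keeps the enlargements
  -- admissible for `Vd s δ₀`.
  let t : Set (X × X) := {a | (L.causal a.1 a.2 ∧ a.1 ≠ a.2 ∧
    c * L.rho s a.1 a.2 < μ (E ∩ L.J a.1 a.2)) ∧ (L.J a.1 a.2 ∩ A).Nonempty ∧
    L.J a.1 a.2 ⊆ U ∧ Bornology.IsBounded (L.J a.1 a.2) ∧ diam (L.J a.1 a.2) < δ}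
  have hfine (x) (hx : x ∈ N) (r) (hr : r > 0) :
      ∃ a ∈ t, x ∈ L.J a.1 a.2 ∧ L.J a.1 a.2 ⊆ ball x r := by
    obtain ⟨a, ha, hxa, har, haU, hbdd, hdiam⟩ :=
      exists_small_mem_subset_of_isOpen hN hUo hNU hδ x hx r hr
    exact ⟨a, ⟨ha, ⟨x, hxa, hNA hx⟩, haU, hbdd, hdiam⟩, hxa, har⟩
  have ht : ∀ a ∈ t, L.chron a.1 a.2 ∧ a.1 ≠ a.2 ∧ L.tau a.1 a.2 ≠ ⊤ ∧
      diam (L.J a.1 a.2) < δ ∧ ∃ e : X × X, IsEnlargement L C1 C2 a.1 a.2 e.1 e.2 := by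
    rintro ⟨p, q⟩ ⟨⟨hpq, hne, hheavy⟩, hA', -, hbdd, hdiam⟩
    have hchron := L.chron_of_measure_inter_pos hnull hpq (zero_le.trans_lt hheavy)
    have hrho : L.rho s p q ≠ ⊤ := fun h => by
      rw [h, ENNReal.mul_top hc] at hheavy
      exact not_top_lt hheavy
    obtain ⟨p', q', he⟩ := henl p q hchron hA' hbdd (hdiam.trans_le (min_le_left _ _))
    exact ⟨hchron, hne, L.tau_ne_top_of_rho_ne_top hs hrho, hdiam, (p', q'), he⟩
  refine L.Vd_le_add_of_fine_cover hs.le hδ₀ hC1 hC1δ hclosed hfine ht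
    (ENNReal.div_ne_top hU hc) (fun u hut hu => ?_) hη
  obtain ⟨hcount, hsum⟩ := μ.countable_and_tsum_le_of_pairwiseDisjoint hU
    (fun a => (hclosed a.1 a.2).measurableSet) hu (fun a ha => (hut ha).2.2.1)
    (fun a ha => (hut ha).1.2.2)
  exact ⟨hcount, (ENNReal.le_div_iff_mul_le (Or.inl hc) (Or.inr hU)).2 (mul_comm c _ ▸ hsum)⟩

theorem PLS.measure_eq_zero_of_forall_exists_lt (hs : 0 < s) (hL : LocalCausalEnlargement L)
    [μ.OuterRegular] (hμ : ∀ A, μ A = L.V s A)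
    (hnull : ∀ p q, L.NullRelated p q → μ (L.J p q) = 0) (hclosed : ∀ p q, IsClosed (L.J p q))
    (hA : IsCompact A) (hEA : E ⊆ A) (hE : μ E ≠ ⊤) (hc : 1 < c) (hNE : N ⊆ E)
    (hN : ∀ x ∈ N, ∀ r > (0 : ℝ), ∃ a : X × X,
      (L.causal a.1 a.2 ∧ a.1 ≠ a.2 ∧ c * L.rho s a.1 a.2 < μ (E ∩ L.J a.1 a.2)) ∧
      x ∈ L.J a.1 a.2 ∧ L.J a.1 a.2 ⊆ ball x r) :
    μ N = 0 := by
  have hμN : μ N ≠ ⊤ := ne_top_of_le_ne_top hE (measure_mono hNE)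
  have hle : μ N ≤ μ N / c := (hμ N).trans_le <| iSup₂_le fun δ hδ =>
    ENNReal.le_of_forall_pos_le_add fun η hη _ => by
      have hη2 : (η / 2 : ℝ≥0∞) ≠ 0 := by simpa using hη.ne'
      obtain ⟨U, hNU, hUo, hμU⟩ := N.exists_isOpen_lt_of_lt (μ N + η / 2)
        (ENNReal.lt_add_right hμN hη2)
      calc L.Vd s δ N ≤ μ U / c + η / 2 :=
            L.Vd_le_measure_div_add_of_isOpen hs hL hnull hclosed hA (hNE.trans hEA)
              (zero_lt_one.trans hc).ne' hN hUo hNU (hμU.trans_le le_top).ne hδ hη2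
        _ ≤ μ N / c + η / 2 / c + η / 2 := by
            rw [← ENNReal.add_div]
            gcongr
        _ ≤ μ N / c + (η / 2 + η / 2) := by
            rw [add_assoc]
            exact add_le_add le_rfl
              (add_le_add (ENNReal.div_le_of_le_mul (le_mul_of_one_le_right' hc.le)) le_rfl)
        _ = μ N / c + η := by rw [ENNReal.add_halves]
  by_contra h
  refine hle.not_gt (ENNReal.div_lt_of_lt_mul ?_)
  simpa using ENNReal.mul_lt_mul_right h hμN hc

end Density

theorem stmt10_general {X : Type*} [MetricSpace X] [MeasurableSpace X] [BorelSpace X]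
    (L : PLS X) (s : ℝ) (hs : 0 ≤ s) (hL : LocalCausalEnlargement L)
    (μ : Measure X) (hμ : ∀ A : Set X, μ A = L.V s A) [μ.OuterRegular]
    (hnull : ∀ p q : X, L.NullRelated p q → L.V s (L.J p q) = 0)
    (hclosed : ∀ p q : X, IsClosed (L.J p q))
    (E : Set X) (hE : L.V s E ≠ ⊤)
    (A : Set X) (hA : IsCompact A) (hEA : E ⊆ A)
    (ε : ℝ) (hε : 0 < ε) :
    ∃ N ⊆ E, μ N = 0 ∧ ∀ x ∈ E \ N, ∃ δx > (0 : ℝ), ∀ p q : X,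
      L.causal p q → p ≠ q → x ∈ L.J p q → L.J p q ⊆ Metric.ball x δx →
      μ (E ∩ L.J p q) ≤ (1 + ENNReal.ofReal ε) * L.rho s p q := by
  set c : ℝ≥0∞ := 1 + ENNReal.ofReal ε
  refine ⟨{x ∈ E | ∀ r > (0 : ℝ), ∃ a : X × X,
    (L.causal a.1 a.2 ∧ a.1 ≠ a.2 ∧ c * L.rho s a.1 a.2 < μ (E ∩ L.J a.1 a.2)) ∧
    x ∈ L.J a.1 a.2 ∧ L.J a.1 a.2 ⊆ ball x r}, sep_subset _ _, ?_, ?_⟩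
  · rcases hs.eq_or_lt with rfl | hs
    · exact measure_mono_null (sep_subset _ _)
        ((hμ E).trans (L.V_eq_zero_of_omegaL_eq_zero omegaL_zero hE))
    · exact PLS.measure_eq_zero_of_forall_exists_lt hs hL hμ
        (fun p q h => (hμ _).trans (hnull p q h)) hclosed hA hEA ((hμ E).trans_ne hE)
        (ENNReal.lt_add_right ENNReal.one_ne_top (by simpa using hε)) (sep_subset _ _)
        fun x hx => hx.2
  · rintro x ⟨hxE, hxN⟩
    simp only [mem_ofPred_eq, hxE, true_and, not_forall, not_exists] at hxN
    obtain ⟨δ, hδ, h⟩ := hxN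
    exact ⟨δ, hδ, fun p q hpq hne hx hJ => not_lt.1 fun hlt => h (p, q) ⟨⟨hpq, hne, hlt⟩, hx, hJ⟩⟩

theorem stmt10 {X : Type*} [MetricSpace X] [MeasurableSpace X] [BorelSpace X]
    (L : PLS X) (s : ℝ) (hs : 0 ≤ s) (hL : LocalCausalEnlargement L)
    (μ : Measure X) (hμ : ∀ A : Set X, μ A = L.V s A) [μ.OuterRegular]
    (hnull : ∀ p q : X, L.NullRelated p q → L.V s (L.J p q) = 0)
    (hclosed : ∀ p q : X, IsClosed (L.J p q))
    (E : Set X) (hE : L.V s E ≠ ⊤)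
    (A : Set X) (hA : IsCompact A) (hEA : E ⊆ A)
    (r : ℝ) (hr : 0 < r) (hthick : ∀ x ∈ E, Metric.ball x r ⊆ A)
    (ε : ℝ) (hε : 0 < ε) :
    ∃ N ⊆ E, μ N = 0 ∧ ∀ x ∈ E \ N, ∃ δx > (0 : ℝ), ∀ p q : X,
      L.causal p q → p ≠ q → x ∈ L.J p q → L.J p q ⊆ Metric.ball x δx →
      μ (E ∩ L.J p q) ≤ (1 + ENNReal.ofReal ε) * L.rho s p q :=
  stmt10_general L s hs hL μ hμ hnull hclosed E hE A hA hEA ε hε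
end
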